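/- arXiv:2410.06687 — 7 statements merged into one kernel-verified Lean document; each statement's English description precedes it below -/
import Mathlib

section
/- The m×m matrix M with entries M_{00}=1/2, M_{j-1,j}=-α_j and M_{j,j-1}=α_j for 1≤j≤m-1 (where α_j = 1/(8j²-2)), and all other entries zero, is nonsingular. -/
open Matrix

/-- α_j = 1/(8j²−2). -/
noncomputable def alph (j : ℕ) : ℝ := 1 / (8 * (j : ℝ) ^ 2 - 2)

/-- The m×m tridiagonal matrix M with M₀₀ = 1/2, M_{j-1,j} = −α_j, M_{j,j-1} = α_j. -/
noncomputable def Mmat (m : ℕ) : Matrix (Fin m) (Fin m) ℝ :=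
  Matrix.of fun i j =>
    if (i : ℕ) = 0 ∧ (j : ℕ) = 0 then 1 / 2
    else if (i : ℕ) + 1 = (j : ℕ) then - alph (j : ℕ)
    else if (j : ℕ) + 1 = (i : ℕ) then alph (i : ℕ)
    else 0

/-- The m×m matrix N = e₀ e₀ᵀ. -/
noncomputable def Nmat (m : ℕ) : Matrix (Fin m) (Fin m) ℝ :=
  Matrix.of fun i j => if (i : ℕ) = 0 ∧ (j : ℕ) = 0 then 1 else 0

/-- The vector v: v_j = 2(2j+1) for even j (0 else) when m is odd;
    v_j = −2(2j+1) for odd j (0 else) when m is even. -/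
noncomputable def vVec (m : ℕ) : Fin m → ℝ := fun j =>
  if Odd m then (if Even (j : ℕ) then 2 * (2 * (j : ℝ) + 1) else 0)
  else (if Odd (j : ℕ) then -2 * (2 * (j : ℝ) + 1) else 0)

/-- The standard basis vector e₀. -/
noncomputable def e0vec (m : ℕ) : Fin m → ℝ := fun i => if (i : ℕ) = 0 then 1 else 0

/-! If `M x = 0` then `0 = xᵀ (M + Mᵀ) x = x₀²`, since `M + Mᵀ = e₀ e₀ᵀ`. Row `i` of `M` vanishes
beyond its superdiagonal entry `-α_{i+1} ≠ 0`, so once `x₀ = ⋯ = xᵢ = 0`, row `i` of `M x = 0`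
reads `-α_{i+1} x_{i+1} = 0`; inductively `x = 0`. -/

lemma alph_ne_zero {j : ℕ} (hj : j ≠ 0) : alph j ≠ 0 := by
  have : (1 : ℝ) ≤ j := by exact_mod_cast Nat.one_le_iff_ne_zero.mpr hj
  rw [alph, one_div]
  exact inv_ne_zero (by nlinarith)

lemma Matrix.dotProduct_add_transpose_mulVec_eq_zero {n R : Type*} [Fintype n] [CommRing R]
    {A : Matrix n n R} {x : n → R} (hx : A *ᵥ x = 0) : x ⬝ᵥ ((A + Aᵀ) *ᵥ x) = 0 := by
  rw [add_mulVec, dotProduct_add, hx, dotProduct_mulVec, vecMul_transpose, hx, dotProduct_zero,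
    zero_dotProduct, add_zero]

lemma Mmat_add_transpose (m : ℕ) : Mmat m + (Mmat m)ᵀ = Nmat m := by
  ext i j
  simp only [Matrix.add_apply, transpose_apply, Mmat, Nmat, of_apply]
  split_ifs <;> first | (exfalso; omega) | ring1

lemma Nmat_mulVec {m : ℕ} (hm : 0 < m) (x : Fin m → ℝ) :
    Nmat m *ᵥ x = Pi.single ⟨0, hm⟩ (x ⟨0, hm⟩) := by
  ext i
  rw [mulVec, dotProduct, Finset.sum_eq_single ⟨0, hm⟩]
  · rcases eq_or_ne i ⟨0, hm⟩ with rfl | hi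
    · simp [Nmat]
    · simp [Nmat, hi, Fin.ext_iff.not.mp hi]
  · intro j _ hj
    simp [Nmat, Fin.ext_iff.not.mp hj]
  · simp

lemma Mmat_mulVec_apply_of_forall_le_eq_zero {m i : ℕ} (hi : i + 1 < m) {x : Fin m → ℝ}
    (hx : ∀ j : Fin m, (j : ℕ) ≤ i → x j = 0) :
    (Mmat m *ᵥ x) ⟨i, by omega⟩ = -alph (i + 1) * x ⟨i + 1, hi⟩ := by
  rw [mulVec, dotProduct, Finset.sum_eq_single ⟨i + 1, hi⟩]
  · simp [Mmat]
  · intro j _ hj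
    rcases le_or_gt (j : ℕ) i with hji | hji
    · rw [hx j hji, mul_zero]
    · have : (j : ℕ) ≠ i + 1 := fun h => hj (Fin.ext h)
      simp only [Mmat, of_apply]
      split_ifs <;> first | omega | rw [zero_mul]
  · simp

lemma Mmat_mulVec_eq_zero_iff {m : ℕ} {x : Fin m → ℝ} : Mmat m *ᵥ x = 0 ↔ x = 0 := by
  refine ⟨fun hx => ?_, fun hx => by rw [hx, mulVec_zero]⟩
  suffices h : ∀ k (hk : k < m), x ⟨k, hk⟩ = 0 from funext fun j => h j j.2
  intro k
  induction k using Nat.strong_induction_on with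
  | _ k ih =>
    intro hk
    cases k with
    | zero =>
      have hquad := dotProduct_add_transpose_mulVec_eq_zero hx
      rwa [Mmat_add_transpose, Nmat_mulVec hk, dotProduct_single, mul_self_eq_zero] at hquad
    | succ i =>
      have hrow := congrFun hx ⟨i, by omega⟩
      rw [Mmat_mulVec_apply_of_forall_le_eq_zero hk fun j hj => ih j (by omega) j.2] at hrow
      simpa [alph_ne_zero i.succ_ne_zero] using hrow

theorem Mmat_nonsingular_general (m : ℕ) : IsUnit (Mmat m).det := by
  rw [isUnit_iff_ne_zero, Ne, ← exists_mulVec_eq_zero_iff]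
  rintro ⟨x, hx0, hx⟩
  exact hx0 (Mmat_mulVec_eq_zero_iff.mp hx)

/-- the matrix M is nonsingular. -/
theorem Mmat_nonsingular (m : ℕ) (hm : 1 ≤ m) : IsUnit (Mmat m).det :=
  Mmat_nonsingular_general m
end

section
/- For the matrix M, the first column of M^{-1} is the vector v, where v = 2(1,0,5,0,…,0,2m−1)^T if m is odd and v = −2(0,3,0,7,…,0,2m−1)^T if m is even; i.e., M v = e_0. -/
open Matrix

/-!
Since `8j² − 2 = 2(2j − 1)(2j + 1)`, we have `α_i (2i − 1) = α_{i+1} (2i + 3) = 1 / (2(2i + 1))`,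
so row `i ≥ 1` of `M v`, which is `α_i v_{i-1} − α_{i+1} v_{i+1}`, vanishes as long as
`v_{i-1}` and `v_{i+1}` are the same multiple of `2(i - 1) + 1` and `2(i + 1) + 1`. This is the
case for `v_j = ±2(2j + 1)` on the indices `j` of parity opposite to `m`; on the last row the
term `v_m` is absent, which costs nothing as `m` does not have that parity. The first row is
`v_0 / 2 − α_1 v_1 = 1`.
-/

lemma alph_mul_eq_alph_succ_mul {i : ℕ} (hi : 1 ≤ i) :
    alph i * (2 * ((i : ℝ) - 1) + 1) = alph (i + 1) * (2 * ((i : ℝ) + 1) + 1) := by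
  have hi' : (1 : ℝ) ≤ i := by exact_mod_cast hi
  have h₁ : 8 * (i : ℝ) ^ 2 - 2 ≠ 0 := by nlinarith
  have h₂ : 8 * ((i : ℝ) + 1) ^ 2 - 2 ≠ 0 := by nlinarith
  simp only [alph, Nat.cast_add, Nat.cast_one]
  field_simp
  ring

/-- The entries of `Mmat`, indexed by `ℕ`. At `i = 0` the truncated `i - 1` is `0`, so the
corner entry `1/2` sits in the slot of the subdiagonal entry. -/
noncomputable def mEntry (i j : ℕ) : ℝ :=
  (if j = i - 1 then (if i = 0 then 1 / 2 else alph i) else 0) +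
    (if j = i + 1 then -alph (i + 1) else 0)

lemma Mmat_apply {m : ℕ} (i j : Fin m) : Mmat m i j = mEntry i j := by
  simp only [Mmat, mEntry, of_apply]
  split_ifs <;> first | omega | rw [zero_add, ‹(j : ℕ) = i + 1›] | ring

lemma Mmat_mulVec_apply {m : ℕ} (f : ℕ → ℝ) (i : Fin m) :
    (Mmat m *ᵥ fun j => f j) i = ∑ j ∈ Finset.range m, mEntry i j * f j := by
  simp only [mulVec, dotProduct, Mmat_apply]
  exact Fin.sum_univ_eq_sum_range (fun j => mEntry i j * f j) m

lemma sum_range_mEntry_mul {f : ℕ → ℝ} {m i : ℕ} (hi : i < m) (hf : f m = 0) :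
    ∑ j ∈ Finset.range m, mEntry i j * f j =
      (if i = 0 then 1 / 2 else alph i) * f (i - 1) - alph (i + 1) * f (i + 1) := by
  simp only [mEntry, add_mul, ite_mul, zero_mul, Finset.sum_add_distrib, Finset.sum_ite_eq',
    Finset.mem_range]
  rw [if_pos (by omega), sub_eq_add_neg, neg_mul]
  congr 1
  split_ifs with h
  · rfl
  · obtain rfl : i + 1 = m := by omega
    rw [hf, mul_zero, neg_zero]

noncomputable def vSeq (m j : ℕ) : ℝ :=
  if Odd (m + j) then (if Odd m then 2 else -2) * (2 * j + 1) else 0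

lemma vSeq_self (m : ℕ) : vSeq m m = 0 := by
  simp [vSeq, ← two_mul]

lemma vVec_eq_vSeq {m : ℕ} (j : Fin m) : vVec m j = vSeq m j := by
  rcases Nat.even_or_odd m with hm | hm <;>
    simp [vVec, vSeq, Nat.odd_add, hm, Nat.not_odd_iff_even.mpr, Nat.not_even_iff_odd]

lemma alph_mul_vSeq_pred (m : ℕ) {i : ℕ} (hi : 1 ≤ i) :
    alph i * vSeq m (i - 1) = alph (i + 1) * vSeq m (i + 1) := by
  have hpar : Odd (m + (i - 1)) ↔ Odd (m + (i + 1)) := by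
    simp only [Nat.odd_iff]
    omega
  simp only [vSeq, hpar]
  split_ifs
  · push_cast [Nat.cast_sub hi]
    linear_combination 2 * alph_mul_eq_alph_succ_mul hi
  · push_cast [Nat.cast_sub hi]
    linear_combination -2 * alph_mul_eq_alph_succ_mul hi
  · simp

lemma vSeq_first_row (m : ℕ) : 1 / 2 * vSeq m 0 - alph 1 * vSeq m 1 = 1 := by
  rcases Nat.even_or_odd m with hm | hm <;>
    norm_num [vSeq, alph, hm, Nat.not_odd_iff_even.mpr]

theorem Mmat_mulVec_vVec_general (m : ℕ) :
    (Mmat m).mulVec (vVec m) = e0vec m := by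
  funext i
  have hv : vVec m = fun j : Fin m => vSeq m j := funext vVec_eq_vSeq
  rw [hv, Mmat_mulVec_apply, sum_range_mEntry_mul i.isLt (vSeq_self m), e0vec]
  split_ifs with hi
  · rw [hi]
    exact vSeq_first_row m
  · rw [alph_mul_vSeq_pred m (by omega), sub_self]

/-- M v = e₀, i.e. v is the first column of M⁻¹. -/
theorem Mmat_mulVec_vVec (m : ℕ) (hm : 1 ≤ m) :
    (Mmat m).mulVec (vVec m) = e0vec m :=
  Mmat_mulVec_vVec_general m
end

section
/- For the matrix M, M w = e_{m−1}, where w := 2(2m−1)(1,3,5,…,2m−1)^T; i.e., the last column of M^{-1} equals w. -/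
/-! Since `8j² − 2 = 2(2j − 1)(2j + 1)`, both off-diagonal contributions of row `i` to `M w`
equal `(2m − 1) / (2i + 1)` and cancel; in the last row the superdiagonal term is absent and
what is left is `1`. -/

open Matrix

/-- The vector w with w_j = 2(2m−1)(2j+1). -/
noncomputable def wVec (m : ℕ) : Fin m → ℝ := fun j => 2 * (2 * (m : ℝ) - 1) * (2 * (j : ℝ) + 1)

lemma alph_succ (k : ℕ) : alph (k + 1) = 1 / (2 * (2 * k + 1) * (2 * k + 3)) := by
  rw [alph]; push_cast; ring

lemma alph_succ_mul_odd (i : ℕ) :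
    alph (i + 1) * (2 * ((i + 1 : ℕ) : ℝ) + 1) = 1 / (2 * (2 * i + 1)) := by
  rw [alph_succ]; push_cast; field_simp; ring

lemma ite_alph_mul_odd_pred (i : ℕ) :
    (if i = 0 then 1 / 2 else alph i) * (2 * ((i - 1 : ℕ) : ℝ) + 1) = 1 / (2 * (2 * i + 1)) := by
  rcases i with _ | k
  · norm_num
  · rw [if_neg k.succ_ne_zero, alph_succ]; push_cast; field_simp; ring

/-- Row `0` fits the pattern of the other rows because `0 - 1 = 0` in `ℕ`: the entry `M₀₀ = 1/2`
takes the place of the subdiagonal entry. -/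
lemma Mmat_apply_s2 (m : ℕ) (i j : Fin m) :
    Mmat m i j = (if (j : ℕ) = i - 1 then (if (i : ℕ) = 0 then 1 / 2 else alph i) else 0)
      + (if (j : ℕ) = i + 1 then -alph j else 0) := by
  simp only [Mmat, of_apply]
  split_ifs <;> first | omega | simp

theorem Mmat_mulVec_apply_s2 (m : ℕ) (v : ℕ → ℝ) (i : Fin m) :
    (Mmat m *ᵥ fun j => v j) i =
      (if (i : ℕ) = 0 then 1 / 2 else alph i) * v (i - 1)
        - if (i : ℕ) + 1 < m then alph (i + 1) * v (i + 1) else 0 := by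
  simp only [mulVec, dotProduct, Mmat_apply_s2, add_mul, Finset.sum_add_distrib]
  rw [Fin.sum_univ_eq_sum_range (fun j => (if j = (i : ℕ) - 1 then _ else 0) * v j),
    Fin.sum_univ_eq_sum_range (fun j => (if j = (i : ℕ) + 1 then -alph j else 0) * v j)]
  simp only [ite_mul, zero_mul, Finset.sum_ite_eq', Finset.mem_range]
  rw [if_pos (by omega)]
  split_ifs <;> ring

theorem Mmat_mulVec_odd (m : ℕ) (c : ℝ) (i : Fin m) :
    (Mmat m *ᵥ fun j : Fin m => c * (2 * (j : ℝ) + 1)) i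
      = if (i : ℕ) + 1 < m then 0 else c / (2 * (2 * i + 1)) := by
  rw [Mmat_mulVec_apply_s2 m (fun j => c * (2 * (j : ℝ) + 1)), mul_left_comm, ite_alph_mul_odd_pred,
    mul_left_comm, alph_succ_mul_odd]
  split_ifs <;> ring

theorem Mmat_mulVec_wVec_general (m : ℕ) :
    (Mmat m).mulVec (wVec m) = (fun i : Fin m => if (i : ℕ) = m - 1 then (1:ℝ) else 0) := by
  ext i
  unfold wVec
  rw [Mmat_mulVec_odd]
  have hi := i.isLt
  by_cases hlast : (i : ℕ) = m - 1
  · have hm : (m : ℝ) = i + 1 := by norm_cast; omega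
    rw [if_neg (by omega), if_pos hlast, hm]
    field_simp
    ring
  · rw [if_pos (by omega), if_neg hlast]

/-- M w = e_{m−1}, i.e. the last column of M⁻¹ equals w. -/
theorem Mmat_mulVec_wVec (m : ℕ) (hm : 1 ≤ m) :
    (Mmat m).mulVec (wVec m) = (fun i : Fin m => if (i : ℕ) = m - 1 then (1:ℝ) else 0) :=
  Mmat_mulVec_wVec_general m
end

section
/- For the matrix M, M(6e_0 − 3v) = e_1, where v is the first column of M^{-1}; equivalently M^{-1} e_1 = 6 e_0 − 3 v. -/
open Matrix

noncomputable def xf (m k : ℕ) : ℝ :=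
  6 * (if k = 0 then 1 else 0) -
    3 * (if Odd m then (if Even k then 2 * (2 * (k : ℝ) + 1) else 0)
         else (if Odd k then -2 * (2 * (k : ℝ) + 1) else 0))

lemma sum_fin_ite (m c : ℕ) (f : ℕ → ℝ) :
    ∑ j : Fin m, (if (j : ℕ) = c then f (j : ℕ) else 0) = if c < m then f c else 0 := by
  rw [Fin.sum_univ_eq_sum_range (fun j => if j = c then f j else 0) m]
  rw [Finset.sum_ite_eq' (Finset.range m) c f]
  simp [Finset.mem_range]

lemma denom_ne (n : ℕ) (hn : 1 ≤ n) : (8 * (n : ℝ) ^ 2 - 2) ≠ 0 := by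
  have h : (1:ℝ) ≤ (n:ℝ) := by exact_mod_cast hn
  nlinarith

lemma key (n : ℕ) (hn : 1 ≤ n) : alph n * (2 * (n:ℝ) - 1) = alph (n+1) * (2 * (n:ℝ) + 3) := by
  have h1 := denom_ne n hn
  have h2 := denom_ne (n+1) (by omega)
  unfold alph at *
  push_cast at *
  field_simp
  ring


/-- M(6e₀ − 3v) = e₁, i.e. M⁻¹e₁ = 6e₀ − 3v, where v = M⁻¹e₀. -/
theorem Mmat_mulVec_six_e0_sub_three_v (m : ℕ) (hm : 2 ≤ m) :
    (Mmat m).mulVec (fun i => 6 * e0vec m i - 3 * vVec m i)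
      = (fun i : Fin m => if (i : ℕ) = 1 then (1:ℝ) else 0) := by
  have hx : (fun i : Fin m => 6 * e0vec m i - 3 * vVec m i)
      = fun i : Fin m => xf m (i : ℕ) := rfl
  rw [hx]
  funext i
  have hn : (i : ℕ) < m := i.isLt
  have hterm : ∀ j : Fin m, Mmat m i j * xf m (j : ℕ) =
      (if (j : ℕ) = (i : ℕ) - 1 then
        (if (i : ℕ) ≠ 0 then alph (i : ℕ) * xf m ((i : ℕ) - 1) else 0) else 0)
      + (if (j : ℕ) = 0 then (if (i : ℕ) = 0 then (1/2) * xf m 0 else 0) else 0)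
      + (if (j : ℕ) = (i : ℕ) + 1 then -alph ((i : ℕ) + 1) * xf m ((i : ℕ) + 1) else 0) := by
    intro j
    simp only [Mmat, Matrix.of_apply]
    split_ifs <;>
      first
        | (exfalso; omega)
        | ring1
        | (rw [show (j : ℕ) = 0 from by omega]; ring1)
        | (rw [show (j : ℕ) = (i : ℕ) - 1 from by omega]; ring1)
        | (rw [show (j : ℕ) = (i : ℕ) + 1 from by omega]; ring1)
  calc Matrix.mulVec (Mmat m) (fun i : Fin m => xf m (i : ℕ)) i
      = ∑ j : Fin m, Mmat m i j * xf m (j : ℕ) := by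
        simp [Matrix.mulVec, dotProduct]
    _ = ∑ j : Fin m, ((if (j : ℕ) = (i : ℕ) - 1 then
        (if (i : ℕ) ≠ 0 then alph (i : ℕ) * xf m ((i : ℕ) - 1) else 0) else 0)
      + (if (j : ℕ) = 0 then (if (i : ℕ) = 0 then (1/2) * xf m 0 else 0) else 0)
      + (if (j : ℕ) = (i : ℕ) + 1 then -alph ((i : ℕ) + 1) * xf m ((i : ℕ) + 1) else 0)) :=
        Finset.sum_congr rfl fun j _ => hterm j
    _ = (if (i : ℕ) - 1 < m then
          (if (i : ℕ) ≠ 0 then alph (i : ℕ) * xf m ((i : ℕ) - 1) else 0) else 0)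
      + (if 0 < m then (if (i : ℕ) = 0 then (1/2) * xf m 0 else 0) else 0)
      + (if (i : ℕ) + 1 < m then -alph ((i : ℕ) + 1) * xf m ((i : ℕ) + 1) else 0) := by
        rw [Finset.sum_add_distrib, Finset.sum_add_distrib,
          sum_fin_ite m ((i : ℕ) - 1) (fun _ =>
            if (i : ℕ) ≠ 0 then alph (i : ℕ) * xf m ((i : ℕ) - 1) else 0),
          sum_fin_ite m 0 (fun _ => if (i : ℕ) = 0 then (1/2) * xf m 0 else 0),
          sum_fin_ite m ((i : ℕ) + 1) (fun _ => -alph ((i : ℕ) + 1) * xf m ((i : ℕ) + 1))]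
    _ = if (i : ℕ) = 1 then (1:ℝ) else 0 := by
        rw [if_pos (show (i : ℕ) - 1 < m by omega), if_pos (show 0 < m by omega)]
        have hn' := hn
        generalize hgen : (i : ℕ) = n at hn' ⊢
        clear hgen hterm hn hx i
        match n with
        | 0 =>
          rw [if_neg (by simp), if_pos rfl, if_pos (by omega : 0 + 1 < m),
            if_neg (by omega : ¬ (0:ℕ) = 1)]
          by_cases ho : Odd m <;>
            norm_num [xf, alph, ho]
        | 1 =>
          rw [if_pos (by omega), if_neg (by omega : ¬ (1:ℕ) = 0), if_pos rfl]
          by_cases ho : Odd m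
          · have h3 : 1 + 1 < m := by
              have := Nat.odd_iff.mp ho; omega
            rw [if_pos h3]
            norm_num [xf, alph, ho, Nat.even_iff]
          · by_cases h3 : 1 + 1 < m <;>
              simp [h3, xf, alph, ho, Nat.odd_iff] <;> norm_num
        | (k+2) =>
          rw [if_pos (by omega), if_neg (by omega : ¬ k + 2 = 0),
            if_neg (by omega : ¬ k + 2 = 1)]
          have hstep : k + 2 - 1 = k + 1 := by omega
          rw [hstep]
          by_cases ho : Odd m <;> by_cases hk : Even k
          · -- Odd m, k even : n = k+2 even, neighbors odd, xf = 0
            have hke := Nat.even_iff.mp hk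
            have h1 : xf m (k + 1) = 0 := by
              simp [xf, ho, Nat.even_iff]; omega
            have h2 : xf m (k + 2 + 1) = 0 := by
              simp [xf, ho, Nat.even_iff]; omega
            rw [h1, h2]
            split_ifs <;> ring
          · -- Odd m, k odd : matching parity
            have hmo := Nat.odd_iff.mp ho
            have hko : k % 2 = 1 := by
              rcases Nat.even_or_odd k with h | h
              · exact absurd h hk
              · exact Nat.odd_iff.mp h
            have hlt : k + 2 + 1 < m := by omega
            rw [if_pos hlt]
            have h1 : xf m (k + 1) = -6 * (2 * (k:ℝ) + 3) := by
              have e1 : Even (k + 1) := Nat.even_iff.mpr (by omega)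
              simp [xf, ho, e1]
              ring
            have h2 : xf m (k + 2 + 1) = -6 * (2 * (k:ℝ) + 7) := by
              have e1 : Even (k + 3) := Nat.even_iff.mpr (by omega)
              simp [xf, ho, show k + 2 + 1 = k + 3 from rfl, e1]
              ring
            rw [h1, h2]
            have hkk := key (k + 2) (by omega)
            push_cast at hkk
            linear_combination (-6 : ℝ) * hkk
          · -- Even m, k even : matching parity
            have hme := Nat.even_iff.mp (Nat.not_odd_iff_even.mp ho)
            have hke := Nat.even_iff.mp hk
            have hlt : k + 2 + 1 < m := by omega
            rw [if_pos hlt]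
            have h1 : xf m (k + 1) = 6 * (2 * (k:ℝ) + 3) := by
              have e1 : Odd (k + 1) := Nat.odd_iff.mpr (by omega)
              simp [xf, ho, e1]
              ring
            have h2 : xf m (k + 2 + 1) = 6 * (2 * (k:ℝ) + 7) := by
              have e1 : Odd (k + 3) := Nat.odd_iff.mpr (by omega)
              simp [xf, ho, show k + 2 + 1 = k + 3 from rfl, e1]
              ring
            rw [h1, h2]
            have hkk := key (k + 2) (by omega)
            push_cast at hkk
            linear_combination (6 : ℝ) * hkk
          · -- Even m, k odd : neighbors even, xf = 0
            have hko : k % 2 = 1 := by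
              rcases Nat.even_or_odd k with h | h
              · exact absurd h hk
              · exact Nat.odd_iff.mp h
            have h1 : xf m (k + 1) = 0 := by
              simp [xf, ho, Nat.odd_iff]; omega
            have h2 : xf m (k + 2 + 1) = 0 := by
              simp [xf, ho, Nat.odd_iff]; omega
            rw [h1, h2]
            split_ifs <;> ring
end

section
/- If m is odd, then (I_m − M^{-1} N)² = I_m, where N is the m×m matrix with (0,0)-entry 1 and other entries 0. -/
open Matrix

/-! With `v` as in `vVec`, one has `M v = e₀` for odd `m`: on an odd row `i` the two neighbours
give `α_i · 2(2i-1) - α_{i+1} · 2(2i+3) = 1/(2i+1) - 1/(2i+1) = 0`, because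
`8j² - 2 = 2(2j-1)(2j+1)`; on an even row the neighbours sit at odd indices, where `v`
vanishes, so only `M₀₀ v₀ = 1` in row `0` survives.
Hence `M⁻¹ e₀ = v`, so `A := M⁻¹ N` has `A² = (M⁻¹)₀₀ A = v₀ A = 2A`, and `(1 - A)² = 1`. -/

theorem sq_one_sub_eq_one_of_mul_self_eq_two_mul {R : Type*} [Ring R] {a : R}
    (h : a * a = 2 * a) : (1 - a) ^ 2 = 1 :=
  calc (1 - a) ^ 2 = 1 - 2 * a + a * a := by noncomm_ring
    _ = 1 := by rw [h]; abel

namespace Matrix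

variable {n : Type*} [Fintype n] [DecidableEq n]

theorem inv_apply_of_mulVec_eq_single {K : Type*} [CommRing K] {A : Matrix n n K}
    (hA : IsUnit A.det) {v : n → K} {i : n} (h : A *ᵥ v = Pi.single i 1) (j : n) :
    A⁻¹ j i = v j := by
  have : A⁻¹ *ᵥ Pi.single i 1 = v := by
    rw [← h, mulVec_mulVec, nonsing_inv_mul _ hA, one_mulVec]
  simpa [mulVec_single_one] using congrFun this j

theorem sq_one_sub_mul_single_of_apply_eq_two {R : Type*} [Ring R] {B : Matrix n n R} {i : n}
    (h : B i i = 2) : (1 - B * single i i 1) ^ 2 = 1 := by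
  apply sq_one_sub_eq_one_of_mul_self_eq_two_mul
  rw [Matrix.mul_assoc, ← Matrix.mul_assoc (single i i 1), single_mul_mul_single, h, one_mul,
    mul_one, two_mul, ← one_add_one_eq_two, single_add, Matrix.mul_add]

end Matrix

theorem alph_succ_mul_eq_alph_add_two_mul (j : ℕ) :
    alph (j + 1) * (2 * (2 * j + 1)) = alph (j + 2) * (2 * (2 * (j + 2 : ℕ) + 1)) := by
  have h₁ : 8 * ((j + 1 : ℕ) : ℝ) ^ 2 - 2 = 2 * (2 * j + 1) * (2 * j + 3) := by push_cast; ring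
  have h₂ : 8 * ((j + 2 : ℕ) : ℝ) ^ 2 - 2 = 2 * (2 * j + 3) * (2 * (j + 2) + 1) := by
    push_cast; ring
  rw [alph, alph, h₁, h₂]
  push_cast
  field_simp

variable {m : ℕ}

theorem Mmat_apply_eq_zero {i j : Fin m} (h₀ : ¬((i : ℕ) = 0 ∧ (j : ℕ) = 0))
    (hij : (i : ℕ) + 1 ≠ j) (hji : (j : ℕ) + 1 ≠ i) : Mmat m i j = 0 := by
  simp [Mmat, h₀, hij, hji]

theorem Nmat_eq_single (hm : 0 < m) : Nmat m = single ⟨0, hm⟩ ⟨0, hm⟩ 1 := by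
  ext i j
  simp [Nmat, single_apply, Fin.ext_iff, eq_comm]

theorem e0vec_eq_single (hm : 0 < m) : e0vec m = Pi.single ⟨0, hm⟩ 1 := by
  ext i
  simp [e0vec, Pi.single_apply, Fin.ext_iff]

theorem vVec_apply_of_even (hodd : Odd m) {j : Fin m} (hj : Even (j : ℕ)) :
    vVec m j = 2 * (2 * (j : ℝ) + 1) := by
  simp [vVec, hodd, hj]

theorem vVec_apply_eq_zero (hodd : Odd m) {j : Fin m} (hj : Odd (j : ℕ)) : vVec m j = 0 := by
  simp [vVec, hodd, Nat.not_even_iff_odd.mpr hj]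

theorem Mmat_mulVec_vVec_apply_of_even (hodd : Odd m) {i : Fin m} (hi : Even (i : ℕ)) :
    (Mmat m *ᵥ vVec m) i = e0vec m i := by
  rw [mulVec, dotProduct, Fintype.sum_eq_single i]
  · rw [vVec_apply_of_even hodd hi]
    by_cases h : (i : ℕ) = 0 <;> simp [Mmat, e0vec, h]
  intro j hne
  rcases Nat.even_or_odd (j : ℕ) with hj | hj
  · have hji : (j : ℕ) ≠ i := Fin.val_ne_of_ne hne
    rw [Mmat_apply_eq_zero (by omega) (by grind) (by grind), zero_mul]
  · rw [vVec_apply_eq_zero hodd hj, mul_zero]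

theorem Mmat_mulVec_vVec_apply_of_odd (hodd : Odd m) {i : Fin m} (hi : Odd (i : ℕ)) :
    (Mmat m *ᵥ vVec m) i = e0vec m i := by
  obtain ⟨k, hk⟩ := hi
  have hlt : 2 * k + 2 < m := by grind
  let P : Fin m := ⟨2 * k, by omega⟩
  let Q : Fin m := ⟨2 * k + 2, hlt⟩
  rw [mulVec, dotProduct, Fintype.sum_eq_add P Q (by simp [P, Q, Fin.ext_iff])]
  · have hP : Mmat m i P = alph (2 * k + 1) := by
      simp [P, Mmat, hk, show 2 * k + 1 + 1 ≠ 2 * k by omega]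
    have hQ : Mmat m i Q = -alph (2 * k + 2) := by simp [Q, Mmat, hk]
    have hcancel := alph_succ_mul_eq_alph_add_two_mul (2 * k)
    rw [hP, hQ, vVec_apply_of_even hodd (by simp [P]),
      vVec_apply_of_even hodd (by simp [Q, Nat.even_add])]
    push_cast at hcancel ⊢
    simp [P, Q, e0vec, hk]
    linarith
  rintro j ⟨hjP, hjQ⟩
  rcases Nat.even_or_odd (j : ℕ) with hj | hj
  · have hij : (i : ℕ) + 1 ≠ j := fun h => hjQ (Fin.ext (by simp [Q]; omega))
    have hji : (j : ℕ) + 1 ≠ i := fun h => hjP (Fin.ext (by simp [P]; omega))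
    rw [Mmat_apply_eq_zero (by omega) hij hji, zero_mul]
  · rw [vVec_apply_eq_zero hodd hj, mul_zero]

theorem Mmat_mulVec_vVec_s6 (hodd : Odd m) : Mmat m *ᵥ vVec m = e0vec m := by
  ext i
  rcases Nat.even_or_odd (i : ℕ) with hi | hi
  · exact Mmat_mulVec_vVec_apply_of_even hodd hi
  · exact Mmat_mulVec_vVec_apply_of_odd hodd hi

theorem sq_one_sub_MinvN_of_odd_general (m : ℕ) (hodd : Odd m) :
    (1 - (Mmat m)⁻¹ * Nmat m) ^ 2 = 1 := by
  rw [Nmat_eq_single hodd.pos]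
  by_cases hdet : IsUnit (Mmat m).det
  · refine sq_one_sub_mul_single_of_apply_eq_two ?_
    have hMv := (Mmat_mulVec_vVec_s6 hodd).trans (e0vec_eq_single hodd.pos)
    rw [inv_apply_of_mulVec_eq_single hdet hMv, vVec_apply_of_even hodd (by simp)]
    norm_num
  · -- a singular `M` has `M⁻¹ = 0` in Mathlib
    rw [nonsing_inv_apply_not_isUnit _ hdet]
    simp

/-- if m is odd then (I − M⁻¹N)² = I. -/
theorem sq_one_sub_MinvN_of_odd (m : ℕ) (hm : 1 ≤ m) (hodd : Odd m) :
    (1 - (Mmat m)⁻¹ * Nmat m) ^ 2 = 1 :=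
  sq_one_sub_MinvN_of_odd_general m hodd
end

section
/- If m is odd, then the vector q := w/w_0 − v/2 satisfies q_0 = 0, and hence M^{-1} N q = 0, where w = M^{-1}e_{m−1} and v = M^{-1}e_0 and N = e_0 e_0^T. Explicitly, q = (0, 3, 0, 7, …, 2m−3, 0)^T, i.e., q_j = 2j+1 for odd j and q_j = 0 for even j. -/
open Matrix

/-- The vector q := w/w₀ − v/2. -/
noncomputable def qVec (m : ℕ) : Fin m → ℝ := fun j => wVec m j / (2 * (2 * (m : ℝ) - 1)) - vVec m j / 2

/-- for odd m, q₀ = 0, M⁻¹N q = 0, and q_j = 2j+1 for odd j, 0 for even j. -/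
theorem qVec_props (m : ℕ) (hm : 1 ≤ m) (hodd : Odd m) :
    qVec m ⟨0, hm⟩ = 0 ∧
    ((Mmat m)⁻¹ * Nmat m).mulVec (qVec m) = 0 ∧
    (∀ j : Fin m, qVec m j = if Odd (j : ℕ) then 2 * (j : ℝ) + 1 else 0) := by

  have hne : 2 * (2 * (m : ℝ) - 1) ≠ 0 := by
    have : (1 : ℝ) ≤ (m : ℝ) := by exact_mod_cast hm
    nlinarith
  have key : ∀ j : Fin m, qVec m j = if Odd (j : ℕ) then 2 * (j : ℝ) + 1 else 0 := by
    intro j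
    simp only [qVec, wVec, vVec, if_pos hodd]
    rw [mul_comm (2 * (2 * (m : ℝ) - 1)) (2 * (j : ℝ) + 1), mul_div_assoc,
      div_self hne, mul_one]
    rcases Nat.even_or_odd (j : ℕ) with h | h
    · rw [if_pos h, if_neg (by simpa [Nat.not_odd_iff_even] using h)]
      ring
    · rw [if_neg (by simpa [Nat.not_even_iff_odd] using h), if_pos h]
      ring
  have h0 : qVec m ⟨0, hm⟩ = 0 := by
    rw [key]; simp
  refine ⟨h0, ?_, key⟩
  have hN : (Nmat m).mulVec (qVec m) = 0 := by
    funext i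
    simp only [Nmat, mulVec, dotProduct, of_apply, Pi.zero_apply]
    rw [Finset.sum_eq_zero]
    intro j _
    by_cases hi : (i : ℕ) = 0
    · by_cases hj : (j : ℕ) = 0
      · have : j = ⟨0, hm⟩ := by ext; simpa using hj
        simp [hi, hj, this, h0]
      · simp [hj]
    · simp [hi]
  rw [← Matrix.mulVec_mulVec, hN, Matrix.mulVec_zero]
end

section
/- If y ∈ C^{p+1}[0,T] and Y_j^n := (∫_0^1 P_j(s) y(t_n + s h) ds)/(∫_0^1 P_j(s)² ds) are the shifted Legendre coefficients of y on the subinterval (t_n, t_{n+1}] with t_n = nh, then for 0 ≤ j ≤ p, |Y_j^n − γ_j y^{(j)}(t_{n+1/2}) h^j| ≤ h^{M} (2j+1) / (2^{M} M!) · sup_I |y^{(M)}|, where γ_j = j!/(2j)! and M = min{j+2, p+1}. -/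
/-!
Rodrigues' formula and `j` integrations by parts give
`∫₀¹ Pⱼ q = (-1)ʲ / j! · ∫₀¹ (s² - s)ʲ q⁽ʲ⁾` for every polynomial `q`. Hence `Pⱼ` is orthogonal to
`(s - 1/2)ᵏ` for `k < j`, and also for `k = j + 1` because `(s² - s)ʲ (s - 1/2)` is a derivative of
a multiple of `(s² - s)ʲ⁺¹`; with the beta integral the same formula gives
`∫₀¹ Pⱼ (s - 1/2)ʲ = j!² / (2j+1)!` and `∫₀¹ Pⱼ² = 1 / (2j+1)`.

Expand `y (t_n + s h)` around the midpoint `t_{n+1/2}` in its Taylor polynomial of degree `M - 1`,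
where `j ≤ M - 1 ≤ j + 1`. Only its `j`-th term has a nonzero Legendre coefficient, namely
`γⱼ y⁽ʲ⁾(t_{n+1/2}) hʲ`. The remainder is bounded by `sup |y⁽ᴹ⁾| hᴹ / (M-1)! · |s - 1/2|ᴹ`, and
Cauchy–Schwarz against `Pⱼ` turns this into the stated bound, using `M² ≤ (2j+1)(2M+1)`.
-/

open Polynomial

/-- The shifted Legendre polynomial of degree n on [0,1], via the Rodrigues formula
    P_n(s) = (1/n!) dⁿ/dsⁿ (s² − s)ⁿ. -/
noncomputable def shiftedLegendre (n : ℕ) : Polynomial ℝ :=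
  (1 / (n.factorial : ℝ)) • (derivative^[n] ((X ^ 2 - X) ^ n))

open intervalIntegral Set
open MeasureTheory (volume)
open scoped Nat

theorem Polynomial.iterate_derivative_natDegree {R : Type*} [Semiring R] (p : R[X]) :
    derivative^[p.natDegree] p = C (p.natDegree ! • p.leadingCoeff) := by
  rw [eq_C_of_natDegree_le_zero ((natDegree_iterate_derivative p _).trans (by simp)),
    coeff_iterate_derivative, zero_add, Nat.descFactorial_self, leadingCoeff]

theorem Polynomial.isRoot_iterate_derivative_pow {R : Type*} [CommRing R] {p : R[X]} {x : R}
    (hx : p.IsRoot x) {i j : ℕ} (hij : i < j) : (derivative^[i] (p ^ j)).IsRoot x := by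
  obtain ⟨r, hr⟩ := pow_sub_dvd_iterate_derivative_pow p j i
  simp [IsRoot, hr, hx.eq_zero, Nat.sub_ne_zero_of_lt hij]

theorem integral_pow_mul_one_sub_pow (a b : ℕ) :
    ∫ x in (0:ℝ)..1, x ^ a * (1 - x) ^ b = a ! * b ! / (a + b + 1)! := by
  induction b generalizing a with
  | zero =>
    simp only [pow_zero, mul_one, integral_pow, one_pow, zero_pow a.succ_ne_zero, sub_zero,
      Nat.factorial_succ, Nat.factorial_zero]
    push_cast
    field_simp
  | succ b ih =>
    have split : ∀ x : ℝ,
        x ^ a * (1 - x) ^ (b + 1) = x ^ a * (1 - x) ^ b - x ^ (a + 1) * (1 - x) ^ b :=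
      fun x => by ring
    simp_rw [split]
    rw [integral_sub (Continuous.intervalIntegrable (by fun_prop) _ _)
      (Continuous.intervalIntegrable (by fun_prop) _ _), ih, ih,
      show a + 1 + b + 1 = a + b + 1 + 1 by ring, show a + (b + 1) + 1 = a + b + 1 + 1 by ring]
    push_cast [Nat.factorial_succ]
    field_simp
    ring

theorem Polynomial.integral_eval_derivative_mul (u g : ℝ[X]) (a b : ℝ) :
    ∫ x in a..b, (derivative u).eval x * g.eval x
      = u.eval b * g.eval b - u.eval a * g.eval a
        - ∫ x in a..b, u.eval x * (derivative g).eval x := by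
  have h := integral_deriv_mul_eq_sub (fun x _ => u.hasDerivAt x) (fun x _ => g.hasDerivAt x)
    ((Polynomial.continuous _).intervalIntegrable a b)
    ((Polynomial.continuous _).intervalIntegrable a b)
  rw [integral_add (Continuous.intervalIntegrable (by fun_prop) _ _)
    (Continuous.intervalIntegrable (by fun_prop) _ _)] at h
  linarith

theorem Polynomial.integral_eval_iterate_derivative_mul {u : ℝ[X]} {a b : ℝ} {m : ℕ}
    (ha : ∀ i < m, (derivative^[i] u).IsRoot a) (hb : ∀ i < m, (derivative^[i] u).IsRoot b)
    (g : ℝ[X]) : ∫ x in a..b, (derivative^[m] u).eval x * g.eval x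
      = (-1) ^ m * ∫ x in a..b, u.eval x * (derivative^[m] g).eval x := by
  induction m generalizing g with
  | zero => simp
  | succ m ih =>
    rw [Function.iterate_succ_apply', integral_eval_derivative_mul, (ha m m.lt_succ_self).eq_zero,
      (hb m m.lt_succ_self).eq_zero, ih (fun i hi => ha i (hi.trans m.lt_succ_self))
        (fun i hi => hb i (hi.trans m.lt_succ_self)), Function.iterate_succ_apply]
    ring

theorem norm_sub_taylorWithinEval_le {E : Type*} [NormedAddCommGroup E] [NormedSpace ℝ E]
    {f : ℝ → E} {a b C c x : ℝ} {n : ℕ} (hab : a < b) (hf : ContDiffOn ℝ (n + 1) f (Icc a b))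
    (hc : c ∈ Icc a b) (hx : x ∈ Icc a b)
    (hC : ∀ t ∈ Icc a b, ‖iteratedDerivWithin (n + 1) f (Icc a b) t‖ ≤ C) :
    ‖f x - taylorWithinEval f n (Icc a b) c x‖ ≤ C * |x - c| ^ (n + 1) / n ! := by
  have hsub : uIcc c x ⊆ Icc a b := uIcc_subset_Icc hc hx
  have hf' : DifferentiableOn ℝ (iteratedDerivWithin n f (Icc a b)) (Icc a b) :=
    hf.differentiableOn_iteratedDerivWithin (mod_cast n.lt_succ_self) (uniqueDiffOn_Icc hab)
  have hderiv : ∀ t ∈ uIcc c x, HasDerivWithinAt (fun u => taylorWithinEval f n (Icc a b) u x)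
      (((n ! : ℝ)⁻¹ * (x - t) ^ n) • iteratedDerivWithin (n + 1) f (Icc a b) t) (uIcc c x) t :=
    fun t ht => (hasDerivWithinAt_taylorWithinEval_at_Icc x hab (hsub ht) hf.of_succ hf').mono hsub
  have hbound : ∀ t ∈ uIcc c x,
      ‖((n ! : ℝ)⁻¹ * (x - t) ^ n) • iteratedDerivWithin (n + 1) f (Icc a b) t‖
        ≤ (n ! : ℝ)⁻¹ * |x - c| ^ n * C := by
    intro t ht
    rw [norm_smul, Real.norm_eq_abs, abs_mul, abs_pow, abs_inv, Nat.abs_cast]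
    gcongr _ * ?_ ^ _ * ?_
    · exact abs_sub_right_of_mem_uIcc ht
    · exact hC t (hsub ht)
  have key := (convex_uIcc c x).norm_image_sub_le_of_norm_hasDerivWithin_le hderiv hbound
    left_mem_uIcc right_mem_uIcc
  rw [taylorWithinEval_self, Real.norm_eq_abs] at key
  calc _ ≤ (n ! : ℝ)⁻¹ * |x - c| ^ n * C * |x - c| := key
    _ = C * |x - c| ^ (n + 1) / n ! := by ring

theorem sq_integral_mul_le_integral_sq_mul_integral_sq {f g : ℝ → ℝ} {a b : ℝ} (hab : a ≤ b)
    (hf : ContinuousOn f (Icc a b)) (hg : ContinuousOn g (Icc a b)) :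
    (∫ x in a..b, f x * g x) ^ 2 ≤ (∫ x in a..b, f x ^ 2) * ∫ x in a..b, g x ^ 2 := by
  rw [← uIcc_of_le hab] at hf hg
  have hquad : ∀ t : ℝ, 0 ≤ (∫ x in a..b, g x ^ 2) * (t * t)
      + (-2 * ∫ x in a..b, f x * g x) * t + ∫ x in a..b, f x ^ 2 := fun t => calc
    0 ≤ ∫ x in a..b, (f x - t * g x) ^ 2 := integral_nonneg hab fun x _ => sq_nonneg _
    _ = ∫ x in a..b, (t * t * g x ^ 2 + -2 * t * (f x * g x) + f x ^ 2) := by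
      congr 1; ext x; ring
    _ = _ := by
      have hg2 : IntervalIntegrable (fun x => g x ^ 2) volume a b := (hg.pow 2).intervalIntegrable
      have hfg : IntervalIntegrable (fun x => f x * g x) volume a b :=
        (hf.mul hg).intervalIntegrable
      have hf2 : IntervalIntegrable (fun x => f x ^ 2) volume a b := (hf.pow 2).intervalIntegrable
      rw [integral_add ((hg2.const_mul _).add (hfg.const_mul _)) hf2,
        integral_add (hg2.const_mul _) (hfg.const_mul _), integral_const_mul, integral_const_mul]
      ring
  have := discrim_le_zero hquad
  rw [discrim] at this
  linarith

theorem integral_sub_half_pow_two_mul (k : ℕ) :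
    ∫ x in (0:ℝ)..1, (x - 1 / 2) ^ (2 * k) = 1 / (2 ^ (2 * k) * (2 * k + 1)) := by
  rw [integral_comp_sub_right (fun x => x ^ (2 * k)), integral_pow,
    show (0:ℝ) - 1 / 2 = -(1 / 2) by ring, Odd.neg_pow ⟨k, rfl⟩,
    show (1:ℝ) - 1 / 2 = 1 / 2 by norm_num, div_pow, one_pow, pow_succ]
  push_cast
  field_simp
  ring

theorem integral_sq_sub_pow (j : ℕ) :
    ∫ x in (0:ℝ)..1, (x ^ 2 - x) ^ j = (-1) ^ j * (j ! * j ! / (2 * j + 1)!) := by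
  have h : ∀ x : ℝ, (x ^ 2 - x) ^ j = (-1) ^ j * (x ^ j * (1 - x) ^ j) := fun x => by
    rw [← mul_pow, ← mul_pow]; ring
  simp_rw [h]
  rw [integral_const_mul, integral_pow_mul_one_sub_pow, two_mul]

theorem integral_sq_sub_pow_mul_sub_half (j : ℕ) :
    ∫ x in (0:ℝ)..1, (x ^ 2 - x) ^ j * (x - 1 / 2) = 0 := by
  have hD : ∀ x : ℝ, (derivative ((X ^ 2 - X : ℝ[X]) ^ (j + 1))).eval x
      = (2 * (j + 1)) * ((x ^ 2 - x) ^ j * (x - 1 / 2)) := fun x => by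
    rw [derivative_pow, derivative_sub, derivative_X_pow, derivative_X]
    simp only [eval_mul, eval_pow, eval_sub, eval_X, eval_C, eval_one]
    push_cast
    ring
  have h := integral_eq_sub_of_hasDerivAt (fun x _ => ((X ^ 2 - X : ℝ[X]) ^ (j + 1)).hasDerivAt x)
    ((Polynomial.continuous _).intervalIntegrable 0 1)
  simp_rw [hD] at h
  rw [integral_const_mul] at h
  simpa [j.cast_add_one_ne_zero] using h

theorem integral_shiftedLegendre_mul (j : ℕ) (g : ℝ[X]) :
    ∫ x in (0:ℝ)..1, (_root_.shiftedLegendre j).eval x * g.eval x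
      = (-1) ^ j / j ! * ∫ x in (0:ℝ)..1, (x ^ 2 - x) ^ j * (derivative^[j] g).eval x := by
  simp_rw [_root_.shiftedLegendre, eval_smul, smul_eq_mul, mul_assoc]
  rw [integral_const_mul, integral_eval_iterate_derivative_mul
    (fun i hi => isRoot_iterate_derivative_pow (by simp) hi)
    (fun i hi => isRoot_iterate_derivative_pow (by simp) hi)]
  simp only [eval_pow, eval_sub, eval_X]
  ring

theorem integral_shiftedLegendre_mul_sub_half_pow {j k : ℕ} (hk : k ≤ j + 1) :
    ∫ x in (0:ℝ)..1, (_root_.shiftedLegendre j).eval x * (x - 1 / 2) ^ k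
      = if k = j then (j ! * j ! / (2 * j + 1)! : ℝ) else 0 := by
  have h := integral_shiftedLegendre_mul j ((X - C (1 / 2)) ^ k)
  simp only [eval_pow, eval_sub, eval_X, eval_C, iterate_derivative_X_sub_pow] at h
  rw [h]
  rcases lt_trichotomy k j with hkj | rfl | hkj
  · simp [Nat.descFactorial_eq_zero_iff_lt.mpr hkj, hkj.ne]
  · simp only [Nat.sub_self, pow_zero, Nat.descFactorial_self, nsmul_eq_mul, mul_one, eval_natCast,
      integral_mul_const, integral_sq_sub_pow, if_true]
    have hsign : ((-1 : ℝ) ^ k) * (-1) ^ k = 1 := by rw [← mul_pow]; norm_num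
    calc _ = ((-1) ^ k * (-1) ^ k) * (k ! * k ! / (2 * k + 1)! : ℝ) * (k ! / k !) := by ring
      _ = _ := by rw [hsign, div_self (by positivity)]; ring
  · obtain rfl : k = j + 1 := by omega
    simp only [Nat.add_sub_cancel_left, pow_one, nsmul_eq_mul, eval_mul, eval_natCast, eval_sub,
      eval_X, eval_C, mul_left_comm _ ((j + 1).descFactorial j : ℝ), integral_const_mul,
      integral_sq_sub_pow_mul_sub_half, mul_zero, if_neg (Nat.succ_ne_self j)]

theorem iterate_derivative_shiftedLegendre (j : ℕ) :
    derivative^[j] (_root_.shiftedLegendre j) = C ((2 * j)! / j ! : ℝ) := by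
  have hmonic : (X ^ 2 - X : ℝ[X]).Monic := monic_X_pow_sub (by simp)
  have hdeg : ((X ^ 2 - X : ℝ[X]) ^ j).natDegree = 2 * j := by
    rw [hmonic.natDegree_pow, show (X ^ 2 - X : ℝ[X]).natDegree = 2 by compute_degree!, mul_comm]
  rw [_root_.shiftedLegendre, iterate_derivative_smul, ← Function.iterate_add_apply, ← two_mul,
    ← hdeg, iterate_derivative_natDegree, (hmonic.pow j).leadingCoeff, hdeg, smul_C]
  simp [div_eq_inv_mul]

theorem integral_shiftedLegendre_sq (j : ℕ) :
    ∫ x in (0:ℝ)..1, (_root_.shiftedLegendre j).eval x ^ 2 = 1 / (2 * j + 1) := by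
  simp_rw [sq]
  rw [integral_shiftedLegendre_mul, iterate_derivative_shiftedLegendre]
  simp only [eval_C]
  rw [integral_mul_const, integral_sq_sub_pow, Nat.factorial_succ]
  have hsign : ((-1 : ℝ) ^ j) * (-1) ^ j = 1 := by rw [← mul_pow]; norm_num
  push_cast
  field_simp
  linear_combination hsign

noncomputable def shiftedLegendreCoeff (j : ℕ) (g : ℝ → ℝ) : ℝ :=
  (∫ x in (0:ℝ)..1, (_root_.shiftedLegendre j).eval x * g x)
    / ∫ x in (0:ℝ)..1, (_root_.shiftedLegendre j).eval x ^ 2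

theorem integral_shiftedLegendre_mul_sum_sub_half_pow {j m : ℕ} (hjm : j ≤ m) (hmj : m ≤ j + 1)
    (d : ℕ → ℝ) :
    ∫ x in (0:ℝ)..1,
        (_root_.shiftedLegendre j).eval x * ∑ k ∈ Finset.range (m + 1), d k * (x - 1 / 2) ^ k
      = d j * (j ! * j ! / (2 * j + 1)!) := by
  simp_rw [Finset.mul_sum, mul_left_comm _ (d _)]
  rw [integral_finsetSum fun k _ => Continuous.intervalIntegrable (by fun_prop) _ _]
  simp_rw [integral_const_mul]
  rw [Finset.sum_congr rfl fun k hk => by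
    rw [integral_shiftedLegendre_mul_sub_half_pow (by have := Finset.mem_range.mp hk; omega)]]
  simp [hjm]

theorem sq_integral_shiftedLegendre_mul_le {R : ℝ → ℝ} {K : ℝ} (j k : ℕ)
    (hR : ContinuousOn R (Icc 0 1)) (hRK : ∀ x ∈ Icc (0:ℝ) 1, |R x| ≤ K * |x - 1 / 2| ^ k) :
    (∫ x in (0:ℝ)..1, (_root_.shiftedLegendre j).eval x * R x) ^ 2
      ≤ (K / 2 ^ k) ^ 2 / ((2 * j + 1) * (2 * k + 1)) := by
  have hRsq : ∀ x ∈ Icc (0:ℝ) 1, R x ^ 2 ≤ K ^ 2 * (x - 1 / 2) ^ (2 * k) := fun x hx => by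
    rw [← sq_abs, pow_mul, ← sq_abs (x - 1 / 2), ← pow_mul, mul_comm 2 k, pow_mul, ← mul_pow]
    exact pow_le_pow_left₀ (abs_nonneg _) (hRK x hx) 2
  calc _ ≤ (∫ x in (0:ℝ)..1, (_root_.shiftedLegendre j).eval x ^ 2)
        * ∫ x in (0:ℝ)..1, R x ^ 2 :=
        sq_integral_mul_le_integral_sq_mul_integral_sq zero_le_one
          (Polynomial.continuous _).continuousOn hR
    _ ≤ 1 / (2 * j + 1) * ∫ x in (0:ℝ)..1, K ^ 2 * (x - 1 / 2) ^ (2 * k) := by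
        rw [integral_shiftedLegendre_sq]
        gcongr
        exact integral_mono_on zero_le_one
          ((hR.pow 2).intervalIntegrable_of_Icc zero_le_one)
          (Continuous.intervalIntegrable (by fun_prop) _ _) hRsq
    _ = _ := by
        rw [integral_const_mul, integral_sub_half_pow_two_mul]
        field_simp
        ring

theorem abs_shiftedLegendreCoeff_sub_le {g : ℝ → ℝ} {d : ℕ → ℝ} {K : ℝ} {j m : ℕ} (hjm : j ≤ m)
    (hmj : m ≤ j + 1) (hK : 0 ≤ K) (hg : ContinuousOn g (Icc 0 1))
    (hgd : ∀ x ∈ Icc (0:ℝ) 1,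
      |g x - ∑ k ∈ Finset.range (m + 1), d k * (x - 1 / 2) ^ k| ≤ K * |x - 1 / 2| ^ (m + 1)) :
    |shiftedLegendreCoeff j g - j ! * j ! / (2 * j)! * d j|
      ≤ (2 * j + 1) * (K / 2 ^ (m + 1)) / (m + 1) := by
  set q : ℝ → ℝ := fun x => ∑ k ∈ Finset.range (m + 1), d k * (x - 1 / 2) ^ k
  have hq : Continuous q := by fun_prop
  set E := ∫ x in (0:ℝ)..1, (_root_.shiftedLegendre j).eval x * (g x - q x)
  have hsplit : ∫ x in (0:ℝ)..1, (_root_.shiftedLegendre j).eval x * g x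
      = d j * (j ! * j ! / (2 * j + 1)!) + E := by
    have hPq : IntervalIntegrable (fun x => (_root_.shiftedLegendre j).eval x * q x) volume 0 1 :=
      Continuous.intervalIntegrable (by fun_prop) 0 1
    have hPR : IntervalIntegrable
        (fun x => (_root_.shiftedLegendre j).eval x * (g x - q x)) volume 0 1 :=
      ((Polynomial.continuous _).continuousOn.mul
        (hg.sub hq.continuousOn)).intervalIntegrable_of_Icc zero_le_one
    rw [← integral_shiftedLegendre_mul_sum_sub_half_pow hjm hmj d, ← integral_add hPq hPR]
    congr 1; ext x; ring
  have hcoeff : shiftedLegendreCoeff j g - j ! * j ! / (2 * j)! * d j = (2 * j + 1) * E := by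
    rw [shiftedLegendreCoeff, hsplit, integral_shiftedLegendre_sq, Nat.factorial_succ]
    push_cast
    field_simp
    ring
  have hE := sq_integral_shiftedLegendre_mul_le (R := fun x => g x - q x) j (m + 1)
    (hg.sub hq.continuousOn) hgd
  have hm : ((m:ℝ) + 1) ^ 2 ≤ (2 * j + 1) * (2 * (m + 1 : ℕ) + 1) := by
    have : (j:ℝ) ≤ m := by exact_mod_cast hjm
    have : (m:ℝ) ≤ j + 1 := by exact_mod_cast hmj
    push_cast
    nlinarith
  rw [hcoeff]
  apply abs_le_of_sq_le_sq _ (by positivity)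
  calc ((2 * j + 1) * E) ^ 2 = (2 * j + 1) ^ 2 * E ^ 2 := by ring
    _ ≤ (2 * j + 1) ^ 2 * ((K / 2 ^ (m + 1)) ^ 2 / ((2 * j + 1) * (2 * (m + 1 : ℕ) + 1))) := by
        gcongr
    _ = (2 * j + 1) * (K / 2 ^ (m + 1)) ^ 2 / (2 * (m + 1 : ℕ) + 1) := by
        field_simp
    _ ≤ ((2 * j + 1) * (K / 2 ^ (m + 1)) / (m + 1)) ^ 2 := by
        rw [div_pow _ ((m:ℝ) + 1), div_le_div_iff₀ (by positivity) (by positivity)]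
        nlinarith [show 0 ≤ (2 * j + 1) * (K / 2 ^ (m + 1)) ^ 2 by positivity]

theorem abs_shiftedLegendreCoeff_comp_sub_iteratedDerivWithin_le {y : ℝ → ℝ} {a b t₀ h B : ℝ}
    {j m : ℕ} (hjm : j ≤ m) (hmj : m ≤ j + 1) (hh : 0 < h) (ha : a ≤ t₀) (hb : t₀ + h ≤ b)
    (hy : ContDiffOn ℝ (m + 1) y (Icc a b))
    (hB : ∀ t ∈ Icc a b, |iteratedDerivWithin (m + 1) y (Icc a b) t| ≤ B) :
    |shiftedLegendreCoeff j (fun s => y (t₀ + s * h))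
        - j ! / (2 * j)! * iteratedDerivWithin j y (Icc a b) (t₀ + h / 2) * h ^ j|
      ≤ h ^ (m + 1) * (2 * j + 1) / (2 ^ (m + 1) * (m + 1)!) * B := by
  have hmem : ∀ s ∈ Icc (0:ℝ) 1, t₀ + s * h ∈ Icc a b := fun s hs =>
    ⟨by nlinarith [hs.1], by nlinarith [hs.2]⟩
  have hc : t₀ + h / 2 ∈ Icc a b := ⟨by linarith, by linarith⟩
  set c := t₀ + h / 2
  have hB0 : 0 ≤ B := (abs_nonneg _).trans (hB c hc)
  have htaylor : ∀ s ∈ Icc (0:ℝ) 1,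
      |y (t₀ + s * h) - ∑ k ∈ Finset.range (m + 1),
          iteratedDerivWithin k y (Icc a b) c * h ^ k / k ! * (s - 1 / 2) ^ k|
        ≤ B * h ^ (m + 1) / m ! * |s - 1 / 2| ^ (m + 1) := fun s hs => by
    have key := norm_sub_taylorWithinEval_le (by linarith) hy hc (hmem s hs) hB
    rw [Real.norm_eq_abs, taylor_within_apply, show t₀ + s * h - c = (s - 1 / 2) * h by ring,
      abs_mul, abs_of_pos hh] at key
    convert key using 3
    · refine Finset.sum_congr rfl fun k _ => ?_
      rw [smul_eq_mul, mul_pow]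
      ring
    · ring
  have hcont : ContinuousOn (fun s => y (t₀ + s * h)) (Icc 0 1) :=
    hy.continuousOn.comp (by fun_prop) hmem
  have := abs_shiftedLegendreCoeff_sub_le hjm hmj (by positivity) hcont htaylor
  convert this using 3
  · field_simp
  · push_cast [Nat.factorial_succ]
    field_simp

theorem legendre_coefficient_bound_general (T : ℝ) (hT : 0 < T) (N : ℕ)
    (h : ℝ) (hh : h = T / N) (p : ℕ) (y : ℝ → ℝ)
    (hy : ContDiffOn ℝ (p + 1) y (Set.Icc 0 T))
    (n : ℕ) (hn : n < N) (j : ℕ) (hj : j ≤ p)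
    (B : ℝ)
    (hB : ∀ t ∈ Set.Icc (0 : ℝ) T,
      |iteratedDerivWithin (min (j + 2) (p + 1)) y (Set.Icc 0 T) t| ≤ B) :
    |(∫ s in (0:ℝ)..1, (_root_.shiftedLegendre j).eval s * y ((n : ℝ) * h + s * h))
        / (∫ s in (0:ℝ)..1, ((_root_.shiftedLegendre j).eval s) ^ 2)
      - ((j.factorial : ℝ) / ((2 * j).factorial : ℝ))
          * iteratedDerivWithin j y (Set.Icc 0 T) (((n : ℝ) + 1 / 2) * h) * h ^ j|
      ≤ h ^ (min (j + 2) (p + 1)) * (2 * (j : ℝ) + 1)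
          / (2 ^ (min (j + 2) (p + 1)) * ((min (j + 2) (p + 1)).factorial : ℝ)) * B := by
  set m := min (j + 1) p
  have hM : min (j + 2) (p + 1) = m + 1 := by omega
  have hN : (0 : ℝ) < N := Nat.cast_pos.mpr (Nat.zero_lt_of_lt hn)
  have hh0 : 0 < h := hh ▸ div_pos hT hN
  have hend : n * h + h ≤ T := calc
    n * h + h = (n + 1) * h := by ring
    _ ≤ N * h := by gcongr; exact_mod_cast hn
    _ = T := by rw [hh]; field_simp
  rw [hM] at hB ⊢
  rw [show ((n : ℝ) + 1 / 2) * h = n * h + h / 2 by ring]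
  exact abs_shiftedLegendreCoeff_comp_sub_iteratedDerivWithin_le (by omega) (by omega) hh0
    (by positivity) hend (hy.of_le (by exact_mod_cast (show m + 1 ≤ p + 1 by omega))) hB

/-- bound on the shifted Legendre coefficients of a C^{p+1} function on a
    subinterval (t_n, t_{n+1}], t_n = nh, h = T/N:
    |Y_j^n − γ_j y^{(j)}(t_{n+1/2}) h^j| ≤ h^M (2j+1)/(2^M M!) · sup|y^{(M)}|,
    γ_j = j!/(2j)!, M = min{j+2, p+1}. -/
theorem legendre_coefficient_bound (T : ℝ) (hT : 0 < T) (N : ℕ) (hN : 2 ≤ N)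
    (h : ℝ) (hh : h = T / N) (p : ℕ) (y : ℝ → ℝ)
    (hy : ContDiffOn ℝ (p + 1) y (Set.Icc 0 T))
    (n : ℕ) (hn : n < N) (j : ℕ) (hj : j ≤ p)
    (B : ℝ)
    (hB : ∀ t ∈ Set.Icc (0 : ℝ) T,
      |iteratedDerivWithin (min (j + 2) (p + 1)) y (Set.Icc 0 T) t| ≤ B) :
    |(∫ s in (0:ℝ)..1, (_root_.shiftedLegendre j).eval s * y ((n : ℝ) * h + s * h))
        / (∫ s in (0:ℝ)..1, ((_root_.shiftedLegendre j).eval s) ^ 2)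
      - ((j.factorial : ℝ) / ((2 * j).factorial : ℝ))
          * iteratedDerivWithin j y (Set.Icc 0 T) (((n : ℝ) + 1 / 2) * h) * h ^ j|
      ≤ h ^ (min (j + 2) (p + 1)) * (2 * (j : ℝ) + 1)
          / (2 ^ (min (j + 2) (p + 1)) * ((min (j + 2) (p + 1)).factorial : ℝ)) * B :=
  legendre_coefficient_bound_general T hT N h hh p y hy n hn j hj B hB
end
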